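/- Ackermann's encoding f, defined recursively on hereditarily finite sets by f(∅) = 0 and f(x) = Σ_{a ∈ x} 2^{f(a)}, is a bijection from the class of hereditarily finite sets to ℕ. -/

import Mathlib

/-!
Members of a hereditarily finite set have strictly smaller codes, because `2 ^ m > m`.
Injectivity follows by induction on the code: if `f x = f y = n`, then `f` is already
injective on the members of `x` and `y`, and both member sets are mapped onto the binary
digits of `n`, so they coincide. Surjectivity follows by strong induction on `n`: the
binary digits of `n` are smaller than `n`, hence codes of some hereditarily finite sets,
and the set of those sets has code `n`.
-/

/-- A ZFC set is hereditarily finite if it is finite and all its members are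
hereditarily finite. -/
def HFSet (x : ZFSet) : Prop := ZFSet.Hereditarily (fun y => y.toSet.Finite) x

open Finset

namespace HFSet

local notation "HF" => {x : ZFSet // HFSet x}

theorem finite {x : ZFSet} (hx : HFSet x) : (x : Set ZFSet).Finite :=
  ZFSet.Hereditarily.self hx

theorem of_mem {x y : ZFSet} (hx : HFSet x) (hy : y ∈ x) : HFSet y :=
  ZFSet.Hereditarily.mem hx hy

noncomputable def members (x : HF) : Finset HF :=
  (x.2.finite.preimage Subtype.val_injective.injOn).toFinset

@[simp]
theorem mem_members {x y : HF} : y ∈ members x ↔ y.1 ∈ x.1 := by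
  simp [members]

theorem members_injective : Function.Injective members := by
  have subset {x y : HF} (h : members x = members y) (z : ZFSet)
      (hz : z ∈ x.1) : z ∈ y.1 :=
    mem_members.1 (h ▸ mem_members.2 hz : (⟨z, x.2.of_mem hz⟩ : HF) ∈ members y)
  exact fun x y h => Subtype.ext <| ZFSet.ext fun z => ⟨subset h z, subset h.symm z⟩

theorem exists_members_eq (t : Finset HF) : ∃ x, members x = t := by
  have hx : HFSet (ZFSet.range fun a : t => a.1.1) := by
    refine ZFSet.hereditarily_iff.2 ⟨?_, fun y hy => ?_⟩
    · change (ZFSet.range _ : Set ZFSet).Finite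
      rw [ZFSet.coe_range]
      exact Set.finite_range _
    · obtain ⟨a, rfl⟩ := ZFSet.mem_range.1 hy
      exact a.1.2
  refine ⟨⟨_, hx⟩, Finset.ext fun y => ?_⟩
  simp [y.2]

def IsAckermannCode (f : HF → ℕ) : Prop :=
  ∀ x, f x = ∑ a ∈ members x, 2 ^ f a

namespace IsAckermannCode

variable {f : HF → ℕ}

theorem lt_of_mem_members (hf : IsAckermannCode f) {x a : HF}
    (ha : a ∈ members x) : f a < f x :=
  calc f a < 2 ^ f a := Nat.lt_two_pow_self
    _ ≤ ∑ b ∈ members x, 2 ^ f b :=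
      single_le_sum (f := fun b => 2 ^ f b) (fun _ _ => Nat.zero_le _) ha
    _ = f x := (hf x).symm

open scoped Classical in
theorem image_members_eq_bitIndices (hf : IsAckermannCode f) {x : HF}
    (hinj : Set.InjOn f (members x)) : (members x).image f = (f x).bitIndices.toFinset := by
  rw [hf x, ← sum_image hinj, toFinset_bitIndices_sum_two_pow]

theorem injOn_lt (hf : IsAckermannCode f) (n : ℕ) : Set.InjOn f {x | f x < n} := by
  classical
  induction n with
  | zero => simp
  | succ n ih =>
    intro x hx y hy hxy
    rcases Nat.lt_succ_iff_lt_or_eq.1 hx with hlt | rfl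
    · exact ih hlt (hxy ▸ hlt : f y < n) hxy
    have hS : Set.InjOn f ↑(members x ∪ members y) := by
      refine ih.mono fun a ha => ?_
      rcases Finset.mem_union.1 ha with ha | ha
      · exact hf.lt_of_mem_members ha
      · exact hxy ▸ hf.lt_of_mem_members ha
    apply members_injective
    rw [← image_eq_image_iff_of_injOn hS subset_union_left subset_union_right,
      hf.image_members_eq_bitIndices (hS.mono subset_union_left),
      hf.image_members_eq_bitIndices (hS.mono subset_union_right), hxy]

theorem injective (hf : IsAckermannCode f) : Function.Injective f := fun x _ hxy =>
  hf.injOn_lt (f x + 1) (Nat.lt_succ_self _) (hxy ▸ Nat.lt_succ_self _) hxy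

theorem surjective (hf : IsAckermannCode f) : Function.Surjective f := by
  classical
  intro n
  induction n using Nat.strong_induction_on with
  | _ n ih =>
  have hdigits : ↑n.bitIndices.toFinset ⊆ f '' Set.univ := fun m hm => by
    obtain ⟨a, ha⟩ := ih m <| Nat.lt_two_pow_self.trans_le <|
      Nat.two_pow_le_of_mem_bitIndices (List.mem_toFinset.1 hm)
    exact ⟨a, trivial, ha⟩
  obtain ⟨t, -, ht⟩ := subset_set_image_iff.1 hdigits
  obtain ⟨x, rfl⟩ := exists_members_eq t
  refine ⟨x, ?_⟩
  rw [hf x, ← sum_image hf.injective.injOn, ht, sum_toFinset_bitIndices_two_pow]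

end IsAckermannCode

end HFSet

/-- Ackermann's encoding: any `f` on hereditarily finite sets satisfying the recursion
`f x = Σ_{a ∈ x} 2 ^ f a` (where the sum ranges over a `Finset` enumerating exactly
the members of `x`) is a bijection onto `ℕ`. -/
theorem ackermann_bijective (f : {x : ZFSet // HFSet x} → ℕ)
    (hf : ∀ (x : {x : ZFSet // HFSet x}) (s : Finset {x : ZFSet // HFSet x}),
      (∀ y : {x : ZFSet // HFSet x}, y ∈ s ↔ (y : ZFSet) ∈ (x : ZFSet)) →
      f x = ∑ a ∈ s, 2 ^ f a) :
    Function.Bijective f := by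
  have hcode : HFSet.IsAckermannCode f := fun x => hf x _ fun _ => HFSet.mem_members
  exact ⟨hcode.injective, hcode.surjective⟩
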